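/- If Σ ⊆ A^ℤ is a cyclic subshift (periodic points dense in Σ), then Adh(L_c(Σ)) = Σ, where L_c(Σ) is the cyclic language of Σ. -/

import Mathlib

/-- The (right) shift map on bi-infinite sequences: `(σ s)_i = s_{i+1}`. -/
def shft {α : Type} : (ℤ → α) → (ℤ → α) := fun s i => s (i + 1)

/-- A finite word `a` is a segment of the bi-infinite sequence `s`. -/
def IsSegment {A : Type} (a : List A) (s : ℤ → A) : Prop :=
  ∃ l : ℤ, ∀ j : Fin a.length, s (l + ((j : ℕ) : ℤ)) = a.get j

/-- The central language of a set of sequences: all segments of its members. -/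
def lang {A : Type} (S : Set (ℤ → A)) : Set (List A) :=
  {a | ∃ s ∈ S, IsSegment a s}

/-- The periodization of a nonempty word: `s̄_i = s_{i mod |s|}`. -/
def periodize {A : Type} (a : List A) (ha : a ≠ []) : ℤ → A := fun i =>
  a.get ⟨(i % (a.length : ℤ)).toNat, by
    have h0 : 0 < (a.length : ℤ) := by
      exact_mod_cast List.length_pos_iff.mpr ha
    have h1 : 0 ≤ i % (a.length : ℤ) := Int.emod_nonneg i (by omega)
    have h2 : i % (a.length : ℤ) < (a.length : ℤ) := Int.emod_lt_of_pos i h0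
    omega⟩

/-- The σ-periodic points of `S`: `Per(σ,S)`. -/
def PerSet {A : Type} (S : Set (ℤ → A)) : Set (ℤ → A) :=
  {s ∈ S | ∃ n : ℕ, 0 < n ∧ ∀ i : ℤ, s (i + (n : ℤ)) = s i}

/-- The cyclic language `L_c(S) = ζ⁻¹(Per(σ,S)) ∪ {ε}`. -/
def Lc {A : Type} (S : Set (ℤ → A)) : Set (List A) :=
  {a | ∃ ha : a ≠ [], periodize a ha ∈ PerSet S} ∪ {[]}

/-- The adherence of a language: sequences all of whose segments occur in words of `L`. -/
def Adh {A : Type} (L : Set (List A)) : Set (ℤ → A) :=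
  {s | ∀ a : List A, IsSegment a s → ∃ w ∈ L, a <:+: w}

/-- The center `C(L)`: bi-extensible words of `L`. -/
def Ctr {A : Type} (L : Set (List A)) : Set (List A) :=
  {a | ∀ N : ℕ, 0 < N → ∃ x y : List A,
    N ≤ x.length ∧ N ≤ y.length ∧ x ++ a ++ y ∈ L}

/-- The cyclic center `C_c(L)`: words all of whose repetitions' cyclic permutations
extend to words of `L` (together with the empty word, by convention). -/
def Cc {A : Type} (L : Set (List A)) : Set (List A) :=
  {a | a = [] ∨ (a ≠ [] ∧ ∀ i : ℕ, 0 < i → ∀ u v : List A,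
    u ++ v = List.flatten (List.replicate i a) →
    ∃ x y : List A, x ++ (v ++ u) ++ y ∈ L)}

/-! Since `A` is discrete, `s` lies in the closure of a set `T` of sequences iff every finite
window of `s` is matched, in place, by some member of `T`. A nonempty word of `L_c(Σ)` is a
segment of its periodization, which lies in `Σ`; as `Σ` is shift invariant, every window of a
sequence of `Adh(L_c(Σ))` is matched in place by a point of `Σ`, so the sequence lies in
`closure Σ = Σ`. Conversely, a segment of `s ∈ Σ` is also a segment of some periodic `p ∈ Σ`
close to `s`. Reading `p` over a multiple of its period, starting where the segment sits, gives
a word of `L_c(Σ)` (its periodization is a shift of `p`) that has the segment as a prefix. -/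

lemma mem_closure_iff_forall_finite_eqOn {ι X : Type*} [TopologicalSpace X] [DiscreteTopology X]
    {T : Set (ι → X)} {s : ι → X} :
    s ∈ closure T ↔ ∀ I : Set ι, I.Finite → ∃ t ∈ T, Set.EqOn t s I := by
  have hb : (nhds s).HasBasis Set.Finite fun I => {t | ∀ i ∈ I, t i = s i} := by
    simpa only [nhds_pi, nhds_discrete] using Filter.hasBasis_pi_pure s
  exact mem_closure_iff_nhds_basis hb

lemma Set.Finite.exists_subset_Icc {I : Set ℤ} (hI : I.Finite) :
    ∃ N : ℕ, I ⊆ Set.Icc (-N) N := by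
  obtain ⟨a, ha⟩ := hI.bddBelow
  obtain ⟨b, hb⟩ := hI.bddAbove
  exact ⟨a.natAbs + b.natAbs, fun i hi => ⟨by have := ha hi; omega, by have := hb hi; omega⟩⟩

section Windows

variable {A : Type}

def window (s : ℤ → A) (l : ℤ) (m : ℕ) : List A :=
  List.ofFn fun j : Fin m => s (l + j)

@[simp]
lemma length_window (s : ℤ → A) (l : ℤ) (m : ℕ) : (window s l m).length = m :=
  List.length_ofFn

@[simp]
lemma getElem_window (s : ℤ → A) (l : ℤ) (m j : ℕ) (hj : j < (window s l m).length) :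
    (window s l m)[j] = s (l + j) :=
  List.getElem_ofFn hj

lemma window_congr {s t : ℤ → A} {l : ℤ} {m : ℕ} (h : Set.EqOn s t (Set.Ico l (l + m))) :
    window s l m = window t l m := by
  unfold window
  congr 1
  funext j
  exact h ⟨by omega, by omega⟩

lemma window_prefix (s : ℤ → A) (l : ℤ) {m m' : ℕ} (h : m ≤ m') :
    window s l m <+: window s l m' := by
  rw [List.prefix_iff_eq_take]
  exact List.ext_getElem (by simp; omega) fun j _ _ => by simp

lemma isSegment_iff_eq_window {a : List A} {s : ℤ → A} :
    IsSegment a s ↔ ∃ l, a = window s l a.length := by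
  refine exists_congr fun l => ⟨fun h => ?_, fun h j => ?_⟩
  · exact List.ext_getElem (by simp) fun j hj _ => by simpa using (h ⟨j, hj⟩).symm
  · rw [List.get_eq_getElem, List.getElem_of_eq h]
    simp

lemma isSegment_window (s : ℤ → A) (l : ℤ) (m : ℕ) : IsSegment (window s l m) s :=
  isSegment_iff_eq_window.2 ⟨l, by simp⟩

lemma IsSegment.of_infix {a w : List A} {s : ℤ → A} (haw : a <:+: w) (hw : IsSegment w s) :
    IsSegment a s := by
  obtain ⟨l, hl⟩ := isSegment_iff_eq_window.1 hw
  rw [hl] at haw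
  generalize w.length = n at haw
  obtain ⟨k, -, hk⟩ := List.infix_iff_getElem?.1 haw
  refine isSegment_iff_eq_window.2 ⟨l + k, List.ext_getElem (by simp) fun j hj _ => ?_⟩
  obtain ⟨-, hjk⟩ : j + k < n ∧ s (l + (j + k)) = a[j] := by simpa [window] using hk j hj
  rw [getElem_window, ← hjk]
  ring_nf

def shiftBy (l : ℤ) (s : ℤ → A) : ℤ → A := fun i => s (i + l)

lemma shft_injective : Function.Injective (shft : (ℤ → A) → ℤ → A) := fun s t h =>
  funext fun i => by simpa [shft] using congrFun h (i - 1)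

lemma shft_mem_iff {S : Set (ℤ → A)} (hS : shft '' S = S) {s : ℤ → A} :
    shft s ∈ S ↔ s ∈ S := by
  simpa only [hS] using shft_injective.mem_set_image (s := S) (a := s)

lemma shiftBy_add_one (l : ℤ) (s : ℤ → A) : shiftBy (l + 1) s = shft (shiftBy l s) :=
  funext fun i => by simp only [shiftBy, shft, add_right_comm, add_assoc]

lemma shiftBy_mem {S : Set (ℤ → A)} (hS : shft '' S = S) {s : ℤ → A} (hs : s ∈ S) (l : ℤ) :
    shiftBy l s ∈ S := by
  induction l using Int.induction_on with
  | zero => show (fun i => s (i + 0)) ∈ S; simpa using hs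
  | succ k ih => rw [shiftBy_add_one]; exact (shft_mem_iff hS).2 ih
  | pred k ih => rw [← shft_mem_iff hS, ← shiftBy_add_one]; simpa using ih

lemma IsSegment.exists_eqOn_Ico {S : Set (ℤ → A)} (hS : shft '' S = S) {s t : ℤ → A}
    {l : ℤ} {m : ℕ} (h : IsSegment (window s l m) t) (ht : t ∈ S) :
    ∃ u ∈ S, Set.EqOn u s (Set.Ico l (l + m)) := by
  obtain ⟨k, hk⟩ := h
  refine ⟨shiftBy (k - l) t, shiftBy_mem hS ht _, fun i ⟨hli, him⟩ => ?_⟩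
  have hj := hk ⟨(i - l).toNat, by simp; omega⟩
  simp only [List.get_eq_getElem, getElem_window, Int.toNat_sub_of_le hli, add_sub_cancel] at hj
  rw [shiftBy, ← hj]
  ring_nf

lemma periodize_natCast {w : List A} (hw : w ≠ []) {j : ℕ} (hj : j < w.length) :
    periodize w hw j = w[j] := by
  have hj' : (j : ℤ) < w.length := by exact_mod_cast hj
  simp [periodize, Int.emod_eq_of_lt (Int.natCast_nonneg j) hj']

lemma isSegment_periodize {w : List A} (hw : w ≠ []) : IsSegment w (periodize w hw) :=
  ⟨0, fun j => by simp [periodize_natCast hw j.2]⟩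

lemma periodize_window {p : ℤ → A} {m : ℕ} (hm : 0 < m) (hp : Function.Periodic p m) (l : ℤ)
    (h : window p l m ≠ []) : periodize (window p l m) h = shiftBy l p := by
  funext i
  have hmod : 0 ≤ i % m := Int.emod_nonneg i (by omega)
  simp only [periodize, List.get_eq_getElem, getElem_window, length_window,
    Int.toNat_of_nonneg hmod, shiftBy]
  rw [← hp.int_mul (i / m) (l + i % m), Int.cast_id]
  congr 1
  linarith [Int.emod_add_mul_ediv i m]

lemma window_mem_Lc {S : Set (ℤ → A)} (hS : shft '' S = S) {p : ℤ → A} (hpS : p ∈ S) {m : ℕ}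
    (hm : 0 < m) (hp : Function.Periodic p m) (l : ℤ) : window p l m ∈ Lc S := by
  have h : window p l m ≠ [] := List.ne_nil_of_length_pos (by simpa using hm)
  refine Or.inl ⟨h, ?_⟩
  rw [periodize_window hm hp l h]
  exact ⟨shiftBy_mem hS hpS l, m, hm, hp.add_const l⟩

variable [TopologicalSpace A] [DiscreteTopology A]

lemma adh_Lc_subset_closure {S : Set (ℤ → A)} (hS : shft '' S = S) :
    Adh (Lc S) ⊆ closure S := by
  intro s hs
  refine mem_closure_iff_forall_finite_eqOn.2 fun I hI => ?_
  obtain ⟨N, hIN⟩ := hI.exists_subset_Icc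
  obtain ⟨w, hwL, hinf⟩ := hs _ (isSegment_window s (-N) (2 * N + 1))
  have hw : w ≠ [] := by rintro rfl; simpa using hinf.length_le
  obtain ⟨hw, hper⟩ : ∃ hw : w ≠ [], periodize w hw ∈ PerSet S := hwL.resolve_right hw
  obtain ⟨t, htS, hts⟩ := ((isSegment_periodize hw).of_infix hinf).exists_eqOn_Ico hS hper.1
  refine ⟨t, htS, hts.mono fun i hi => ?_⟩
  have := hIN hi
  simp only [Set.mem_Icc, Set.mem_Ico] at this ⊢
  omega

lemma subset_adh_Lc {S : Set (ℤ → A)} (hS : shft '' S = S) (hcyc : S ⊆ closure (PerSet S)) :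
    S ⊆ Adh (Lc S) := by
  intro s hs a ha
  obtain ⟨l, hl⟩ := isSegment_iff_eq_window.1 ha
  obtain ⟨p, ⟨hpS, n, hn, hp : Function.Periodic p n⟩, hps⟩ :=
    mem_closure_iff_forall_finite_eqOn.1 (hcyc hs) _ (Set.finite_Ico l (l + a.length))
  have hper : Function.Periodic p ((a.length + 1) * n : ℕ) := by
    simpa using hp.nat_mul (a.length + 1)
  refine ⟨_, window_mem_Lc hS hpS (by positivity) hper l, ?_⟩
  calc a = window p l a.length := hl.trans (window_congr hps.symm)
    _ <:+: _ := (window_prefix p l (by nlinarith)).isInfix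

end Windows

theorem stmt_14_general (A : Type) [TopologicalSpace A]
    [DiscreteTopology A] (S : Set (ℤ → A))
    (hS : IsClosed S ∧ shft '' S = S) (hcyc : S ⊆ closure (PerSet S)) :
    Adh (Lc S) = S :=
  subset_antisymm ((adh_Lc_subset_closure hS.2).trans hS.1.closure_subset)
    (subset_adh_Lc hS.2 hcyc)

/-- if `Σ ⊆ A^ℤ` is a cyclic subshift (periodic points dense), then
`Adh(L_c(Σ)) = Σ`. -/
theorem stmt_14 (A : Type) [Fintype A] [Nonempty A] [TopologicalSpace A]
    [DiscreteTopology A] (S : Set (ℤ → A))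
    (hS : IsClosed S ∧ shft '' S = S) (hcyc : S ⊆ closure (PerSet S)) :
    Adh (Lc S) = S :=
  stmt_14_general A S hS hcyc
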